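/- Let S ⊂ ℝⁿ₊ be compact convex with 0 ∈ S and S ≠ {0}, σ_S = φ_S(1,…,1) > 0, and let u : ℂⁿ → [−∞,∞) be upper semicontinuous with u ≤ H_S + c_u for a constant c_u ∈ ℝ. For δ ∈ (0, σ_S^{-1}) set R^b_δ u(z) = sup_{w∈ℂⁿ} { u(Zw) − δ^{−1} log(‖w − 1ₙ‖_∞ + 1) }, where Zw = (z₁w₁,…,zₙwₙ) and 1ₙ = (1,…,1). Then for every z ∈ ℂⁿ: u(z) ≤ R^b_{δ'} u(z) ≤ R^b_δ u(z) whenever 0 < δ' < δ < σ_S^{-1}, and R^b_δ u(z) → u(z) as δ ↘ 0. -/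

import Mathlib

open MeasureTheory Filter Topology Set Pointwise
open scoped ENNReal NNReal Classical

noncomputable section

/-- The positive orthant `ℝⁿ₊ = [0,∞)ⁿ`. -/
def posOrthant (n : ℕ) : Set (Fin n → ℝ) := {x | ∀ i, 0 ≤ x i}

/-- The supporting function `φ_S(ξ) = sup_{x ∈ S} ⟨x, ξ⟩` of a set `S ⊆ ℝⁿ`. -/
def suppFn {n : ℕ} (S : Set (Fin n → ℝ)) (ξ : Fin n → ℝ) : ℝ :=
  sSup ((fun x => ∑ i, x i * ξ i) '' S)

/-- `σ_S = φ_S(1,…,1)`. -/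
def sigmaS {n : ℕ} (S : Set (Fin n → ℝ)) : ℝ := suppFn S 1

/-- `ℂ*ⁿ = (ℂ ∖ {0})ⁿ`. -/
def torusComp (n : ℕ) : Set (Fin n → ℂ) := {z | ∀ i, z i ≠ 0}

/-- The logarithmic supporting function `H_S`:
`H_S(z) = φ_S(log|z₁|,…,log|zₙ|)` on `ℂ*ⁿ`, and the limsup over `ℂ*ⁿ ∋ w → z` elsewhere. -/
def HS {n : ℕ} (S : Set (Fin n → ℝ)) (z : Fin n → ℂ) : ℝ :=
  if z ∈ torusComp n then suppFn S (fun i => Real.log ‖z i‖)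
  else Filter.limsup (fun w => suppFn S (fun i => Real.log ‖w i‖)) (𝓝[torusComp n] z)

/-- The positive part of an extended real number, as an element of `ℝ≥0∞`. -/
def erealPos (x : EReal) : ℝ≥0∞ := if x = ⊤ then ⊤ else ENNReal.ofReal x.toReal

/-- The circle integral `∫₀^{2π} u(a + r e^{iθ} b) dθ` for an `EReal`-valued `u`,
defined as the (upper) integral of the positive part minus that of the negative part. -/
def circInt {n : ℕ} (u : (Fin n → ℂ) → EReal) (a b : Fin n → ℂ) (r : ℝ) : EReal :=
  ((∫⁻ θ in Set.Ioc (0 : ℝ) (2 * Real.pi),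
      erealPos (u (a + ((r : ℂ) * Complex.exp ((θ : ℂ) * Complex.I)) • b))) : EReal) -
  ((∫⁻ θ in Set.Ioc (0 : ℝ) (2 * Real.pi),
      erealPos (-u (a + ((r : ℂ) * Complex.exp ((θ : ℂ) * Complex.I)) • b))) : EReal)

/-- `u : Ω → [−∞,∞)` is plurisubharmonic on an open `Ω ⊆ ℂⁿ`: upper semicontinuous on `Ω`,
`< +∞` on `Ω`, not identically `−∞` on any connected component of `Ω`, and satisfying the
submean inequality `2π · u(a) ≤ ∫₀^{2π} u(a + r e^{iθ} b) dθ` over closed discs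
`{a + ζ b : |ζ| ≤ r} ⊆ Ω` in complex lines. -/
def PshOn {n : ℕ} (Ω : Set (Fin n → ℂ)) (u : (Fin n → ℂ) → EReal) : Prop :=
  UpperSemicontinuousOn u Ω ∧
  (∀ z ∈ Ω, u z ≠ ⊤) ∧
  (∀ z ∈ Ω, ∃ w ∈ connectedComponentIn Ω z, u w ≠ ⊥) ∧
  ∀ a b : Fin n → ℂ, ∀ r : ℝ, 0 < r →
    (∀ ζ : ℂ, ‖ζ‖ ≤ r → a + ζ • b ∈ Ω) →
    ((2 * Real.pi : ℝ) : EReal) * u a ≤ circInt u a b r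

/-- The Lelong class `L^S(ℂⁿ)`: plurisubharmonic functions on `ℂⁿ` with `u ≤ H_S + c_u`. -/
def LelongClass {n : ℕ} (S : Set (Fin n → ℝ)) (u : (Fin n → ℂ) → EReal) : Prop :=
  PshOn Set.univ u ∧ ∃ c : ℝ, ∀ z, u z ≤ ((HS S z + c : ℝ) : EReal)

/-- The Euclidean norm on `ℂⁿ`. -/
def eucNorm {n : ℕ} (z : Fin n → ℂ) : ℝ := Real.sqrt (∑ i, ‖z i‖ ^ 2)

/-- A distance function on `ℂⁿ`: continuous, vanishing exactly at `0`, and absolutely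
homogeneous with respect to complex scalars. -/
def IsDistFn {n : ℕ} (μ : (Fin n → ℂ) → ℝ) : Prop :=
  Continuous μ ∧ (∀ z, 0 ≤ μ z) ∧ (∀ z, μ z = 0 ↔ z = 0) ∧
    ∀ (t : ℂ) (z : Fin n → ℂ), μ (t • z) = ‖t‖ * μ z

/-- `r_μ = inf_{|z| = 1} μ(z)` (Euclidean unit sphere). -/
def rMu {n : ℕ} (μ : (Fin n → ℂ) → ℝ) : ℝ := sInf (μ '' {z | eucNorm z = 1})

/-- `S` is a lower set: `x ∈ S` implies `[0,x₁] × ⋯ × [0,xₙ] ⊆ S`. -/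
def IsLowerIn {n : ℕ} (S : Set (Fin n → ℝ)) : Prop :=
  ∀ x ∈ S, ∀ y : Fin n → ℝ, (∀ i, 0 ≤ y i ∧ y i ≤ x i) → y ∈ S

/-- The standard simplex `Σ = ch{0, e₁, …, eₙ}`. -/
def stdSimpl (n : ℕ) : Set (Fin n → ℝ) :=
  convexHull ℝ (insert 0 (Set.range fun i => Pi.single i 1))


/-- The supremal convolution
`R^b_δ u(z) = sup_{w ∈ ℂⁿ} { u(Zw) − δ⁻¹ log(‖w − 1ₙ‖_∞ + 1) }`. -/
def Rb {n : ℕ} (δ : ℝ) (u : (Fin n → ℂ) → EReal) (z : Fin n → ℂ) : EReal :=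
  ⨆ w : Fin n → ℂ, (u (z * w) - ((δ⁻¹ * Real.log (‖w - 1‖ + 1) : ℝ) : EReal))


/-! Taking `w = 1` gives `u ≤ R^b_δ u`, and the penalty `δ⁻¹ log(‖w - 1‖ + 1)` grows as `δ`
shrinks, which gives monotonicity. For the limit, `H_S(z) ≤ σ_S log(‖z‖ + 1)` and
`log(‖zw‖ + 1) ≤ log(‖z‖ + 1) + log(‖w - 1‖ + 1)` show that `u(zw)` grows at most like
`σ_S log(‖w - 1‖ + 1)`. Once `δ⁻¹` beats this growth by a large enough margin, the penalty
makes every `w` outside a small ball around `1` irrelevant, and inside that ball upper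
semicontinuity of `u` at `z` controls `u(zw)`. -/

section SupportingFunction

variable {n : ℕ} {S : Set (Fin n → ℝ)}

lemma bddAbove_suppFn_image (hS : IsCompact S) (ξ : Fin n → ℝ) :
    BddAbove ((fun x : Fin n → ℝ => ∑ i, x i * ξ i) '' S) :=
  (hS.image (by fun_prop)).bddAbove

lemma sum_le_sigmaS (hS : IsCompact S) {x : Fin n → ℝ} (hx : x ∈ S) : ∑ i, x i ≤ sigmaS S := by
  simpa [sigmaS, suppFn] using le_csSup (bddAbove_suppFn_image hS 1) ⟨x, hx, rfl⟩

lemma sigmaS_nonneg (hS : IsCompact S) (hS0 : (0 : Fin n → ℝ) ∈ S) : 0 ≤ sigmaS S := by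
  simpa using sum_le_sigmaS hS hS0

lemma suppFn_nonneg (hS : IsCompact S) (hS0 : (0 : Fin n → ℝ) ∈ S) (ξ : Fin n → ℝ) :
    0 ≤ suppFn S ξ := by
  simpa [suppFn] using le_csSup (bddAbove_suppFn_image hS ξ) ⟨0, hS0, rfl⟩

lemma suppFn_le_sigmaS_mul (hSsub : S ⊆ posOrthant n) (hS : IsCompact S)
    (hS0 : (0 : Fin n → ℝ) ∈ S) {ξ : Fin n → ℝ} {M : ℝ} (hM : 0 ≤ M) (hξ : ∀ i, ξ i ≤ M) :
    suppFn S ξ ≤ sigmaS S * M := by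
  refine csSup_le ⟨_, 0, hS0, rfl⟩ ?_
  rintro _ ⟨x, hx, rfl⟩
  calc ∑ i, x i * ξ i ≤ ∑ i, x i * M :=
        Finset.sum_le_sum fun i _ => mul_le_mul_of_nonneg_left (hξ i) (hSsub hx i)
    _ = (∑ i, x i) * M := (Finset.sum_mul ..).symm
    _ ≤ sigmaS S * M := mul_le_mul_of_nonneg_right (sum_le_sigmaS hS hx) hM

lemma log_norm_apply_le_log_norm_add_one {ι : Type*} [Fintype ι] (w : ι → ℂ) (i : ι) :
    Real.log ‖w i‖ ≤ Real.log (‖w‖ + 1) := by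
  rcases (norm_nonneg (w i)).eq_or_lt with h | h
  · rw [← h, Real.log_zero]
    exact Real.log_nonneg (by linarith [norm_nonneg w])
  · exact Real.log_le_log h (by linarith [norm_le_pi_norm w i])

lemma suppFn_log_norm_le (hSsub : S ⊆ posOrthant n) (hS : IsCompact S)
    (hS0 : (0 : Fin n → ℝ) ∈ S) (w : Fin n → ℂ) :
    suppFn S (fun i => Real.log ‖w i‖) ≤ sigmaS S * Real.log (‖w‖ + 1) :=
  suppFn_le_sigmaS_mul hSsub hS hS0 (Real.log_nonneg (by linarith [norm_nonneg w]))
    (log_norm_apply_le_log_norm_add_one w)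

lemma dense_torusComp : Dense (torusComp n) := by
  have : torusComp n = Set.univ.pi fun _ => {0}ᶜ := by ext; simp [torusComp]
  exact this ▸ dense_pi _ fun _ _ => dense_compl_singleton 0

lemma HS_le_sigmaS_mul_log (hSsub : S ⊆ posOrthant n) (hS : IsCompact S)
    (hS0 : (0 : Fin n → ℝ) ∈ S) (z : Fin n → ℂ) :
    HS S z ≤ sigmaS S * Real.log (‖z‖ + 1) := by
  unfold HS
  split_ifs
  · exact suppFn_log_norm_le hSsub hS hS0 z
  · have : (𝓝[torusComp n] z).NeBot :=
      mem_closure_iff_nhdsWithin_neBot.1 (dense_torusComp z)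
    set g : (Fin n → ℂ) → ℝ := fun w => sigmaS S * Real.log (‖w‖ + 1)
    have hg : Tendsto g (𝓝[torusComp n] z) (𝓝 (g z)) := by
      refine ((continuous_const.mul ?_).tendsto z).mono_left nhdsWithin_le_nhds
      exact (continuous_norm.add continuous_const).log fun w =>
        (by positivity : (0 : ℝ) < ‖w‖ + 1).ne'
    calc limsup (fun w => suppFn S (fun i => Real.log ‖w i‖)) (𝓝[torusComp n] z)
        ≤ limsup g (𝓝[torusComp n] z) :=
          limsup_le_limsup (.of_forall (suppFn_log_norm_le hSsub hS hS0))
            (isCoboundedUnder_le_of_le _ fun _ => suppFn_nonneg hS hS0 _) hg.isBoundedUnder_le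
      _ = g z := hg.limsup_eq

end SupportingFunction

lemma log_norm_mul_add_one_le {ι : Type*} [Fintype ι] (z w : ι → ℂ) :
    Real.log (‖z * w‖ + 1) ≤ Real.log (‖z‖ + 1) + Real.log (‖w - 1‖ + 1) := by
  have hone : ‖(1 : ι → ℂ)‖ ≤ 1 := (pi_norm_le_iff_of_nonneg zero_le_one).2 fun i => by simp
  have hw : ‖w‖ ≤ ‖w - 1‖ + 1 := by
    calc ‖w‖ = ‖(w - 1) + 1‖ := by rw [sub_add_cancel]
      _ ≤ ‖w - 1‖ + 1 := (norm_add_le _ _).trans (by linarith)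
  have hzw : ‖z * w‖ + 1 ≤ (‖z‖ + 1) * (‖w - 1‖ + 1) := by
    nlinarith [norm_mul_le z w, norm_nonneg z, norm_nonneg (w - 1)]
  rw [← Real.log_mul (by positivity) (by positivity)]
  exact Real.log_le_log (by positivity) hzw

lemma HS_mul_le {n : ℕ} {S : Set (Fin n → ℝ)} (hSsub : S ⊆ posOrthant n) (hS : IsCompact S)
    (hS0 : (0 : Fin n → ℝ) ∈ S) (z w : Fin n → ℂ) :
    HS S (z * w) ≤
      sigmaS S * Real.log (‖z‖ + 1) + sigmaS S * Real.log (‖w - 1‖ + 1) := by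
  rw [← mul_add]
  exact (HS_le_sigmaS_mul_log hSsub hS hS0 _).trans
    (mul_le_mul_of_nonneg_left (log_norm_mul_add_one_le z w) (sigmaS_nonneg hS hS0))

section SupremalConvolution

variable {n : ℕ} {u : (Fin n → ℂ) → EReal} {z : Fin n → ℂ}

lemma log_norm_sub_one_add_one_nonneg (w : Fin n → ℂ) : 0 ≤ Real.log (‖w - 1‖ + 1) :=
  Real.log_nonneg (by linarith [norm_nonneg (w - 1)])

lemma le_Rb (δ : ℝ) : u z ≤ Rb δ u z := by
  simpa [Rb] using le_iSup (fun w => u (z * w) - ((δ⁻¹ * Real.log (‖w - 1‖ + 1) : ℝ) : EReal)) 1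

lemma Rb_le_Rb {δ δ' : ℝ} (hδ' : 0 < δ') (hδ'δ : δ' ≤ δ) : Rb δ' u z ≤ Rb δ u z :=
  iSup_mono fun w => EReal.sub_le_sub le_rfl <| EReal.coe_le_coe_iff.2 <|
    mul_le_mul_of_nonneg_right (inv_anti₀ hδ' hδ'δ) (log_norm_sub_one_add_one_nonneg w)

theorem tendsto_Rb_nhdsGT_zero (husc : UpperSemicontinuousAt u z) {A B : ℝ}
    (hgrowth : ∀ w, u (z * w) ≤ ((A + B * Real.log (‖w - 1‖ + 1) : ℝ) : EReal)) :
    Tendsto (fun δ => Rb δ u z) (𝓝[>] 0) (𝓝 (u z)) := by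
  refine tendsto_order.2 ⟨fun m hm => .of_forall fun δ => hm.trans_le (le_Rb δ), fun M hM => ?_⟩
  obtain ⟨r, hzr, hrM⟩ := EReal.lt_iff_exists_real_btwn.1 hM
  have hnear : ∀ᶠ w in 𝓝 (1 : Fin n → ℂ), u (z * w) < r :=
    ((continuous_const.mul continuous_id).tendsto' 1 z (mul_one z)).eventually (husc r hzr)
  obtain ⟨ρ, hρ, hball⟩ := Metric.eventually_nhds_iff.1 hnear
  have hL₀ : 0 < Real.log (ρ + 1) := Real.log_pos (by linarith)
  -- Off the ball, a penalty rate `δ⁻¹ ≥ B + K` absorbs the growth rate `B`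
  -- and leaves `A - K log(ρ + 1) ≤ r`.
  set K := max 0 ((A - r) / Real.log (ρ + 1))
  have hK : A - r ≤ K * Real.log (ρ + 1) := (div_le_iff₀ hL₀).1 (le_max_right _ _)
  filter_upwards [self_mem_nhdsWithin, tendsto_inv_nhdsGT_zero.eventually_ge_atTop (B + K)]
    with δ (hδ : 0 < δ) hδBK
  refine (iSup_le fun w => ?_).trans_lt hrM
  have hL := log_norm_sub_one_add_one_nonneg w
  by_cases hw : dist w 1 < ρ
  · calc u (z * w) - ((δ⁻¹ * Real.log (‖w - 1‖ + 1) : ℝ) : EReal)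
        ≤ (r : EReal) - ((0 : ℝ) : EReal) :=
          EReal.sub_le_sub (hball hw).le (EReal.coe_le_coe_iff.2 (by positivity))
      _ = r := by simp
  · have hLρ : Real.log (ρ + 1) ≤ Real.log (‖w - 1‖ + 1) :=
      Real.log_le_log (by linarith) (by rw [dist_eq_norm] at hw; linarith)
    calc u (z * w) - ((δ⁻¹ * Real.log (‖w - 1‖ + 1) : ℝ) : EReal)
        ≤ ((A + B * Real.log (‖w - 1‖ + 1) - δ⁻¹ * Real.log (‖w - 1‖ + 1) : ℝ) : EReal) := by
          rw [EReal.coe_sub]; exact EReal.sub_le_sub (hgrowth w) le_rfl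
      _ ≤ r := EReal.coe_le_coe_iff.2 <| by
          nlinarith [mul_le_mul_of_nonneg_right hδBK hL,
            mul_le_mul_of_nonneg_left hLρ (le_max_left 0 ((A - r) / Real.log (ρ + 1)))]

end SupremalConvolution

theorem statement17_general {n : ℕ} (S : Set (Fin n → ℝ))
    (hSsub : S ⊆ posOrthant n) (hScomp : IsCompact S)
    (hS0 : (0 : Fin n → ℝ) ∈ S)
    (u : (Fin n → ℂ) → EReal) (husc : UpperSemicontinuous u)
    (c : ℝ) (hc : ∀ z, u z ≤ ((HS S z + c : ℝ) : EReal)) :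
    ∀ z : Fin n → ℂ,
      (∀ δ δ' : ℝ, 0 < δ' → δ' < δ → δ < (sigmaS S)⁻¹ →
        u z ≤ Rb δ' u z ∧ Rb δ' u z ≤ Rb δ u z) ∧
      Tendsto (fun d : ℝ => Rb d u z) (𝓝[>] (0 : ℝ)) (𝓝 (u z)) := by
  intro z
  refine ⟨fun δ δ' hδ' hδ'δ _ => ⟨le_Rb δ', Rb_le_Rb hδ' hδ'δ.le⟩, tendsto_Rb_nhdsGT_zero (husc z)
    (A := sigmaS S * Real.log (‖z‖ + 1) + c) (B := sigmaS S) fun w => (hc (z * w)).trans ?_⟩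
  exact EReal.coe_le_coe_iff.2 (by linarith [HS_mul_le hSsub hScomp hS0 z w])

/-- For compact convex `0 ∈ S ⊆ ℝⁿ₊` with `S ≠ {0}` (so `σ_S > 0`), and an
upper semicontinuous `u : ℂⁿ → [−∞,∞)` with `u ≤ H_S + c_u`: for every `z ∈ ℂⁿ`,
`u(z) ≤ R^b_{δ'} u(z) ≤ R^b_δ u(z)` whenever `0 < δ' < δ < σ_S⁻¹`, and
`R^b_δ u(z) → u(z)` as `δ ↘ 0`. -/
theorem statement17 {n : ℕ} (S : Set (Fin n → ℝ))
    (hSsub : S ⊆ posOrthant n) (hSconv : Convex ℝ S) (hScomp : IsCompact S)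
    (hS0 : (0 : Fin n → ℝ) ∈ S) (hSne : S ≠ {0}) (hσ : 0 < sigmaS S)
    (u : (Fin n → ℂ) → EReal) (husc : UpperSemicontinuous u) (htop : ∀ z, u z ≠ ⊤)
    (c : ℝ) (hc : ∀ z, u z ≤ ((HS S z + c : ℝ) : EReal)) :
    ∀ z : Fin n → ℂ,
      (∀ δ δ' : ℝ, 0 < δ' → δ' < δ → δ < (sigmaS S)⁻¹ →
        u z ≤ Rb δ' u z ∧ Rb δ' u z ≤ Rb δ u z) ∧
      Tendsto (fun d : ℝ => Rb d u z) (𝓝[>] (0 : ℝ)) (𝓝 (u z)) :=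
  statement17_general S hSsub hScomp hS0 u husc c hc

end
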